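/- arXiv:1108.3147 — 3 statements merged into one kernel-verified Lean document; each statement's English description precedes it below -/
import Mathlib

section
/- Let A and B be n×n real symmetric matrices. Then the bounded Lipschitz distance between their empirical spectral distributions satisfies d_BL²(F^A, F^B) ≤ (1/n) Tr((A − B)²). -/
open MeasureTheory Filter Finset ProbabilityTheory Topology
open scoped Classical ENNReal NNReal

noncomputable section

/-- Empirical spectral distribution of a real `n × n` matrix `A`; defined as the uniform
probability measure on the eigenvalues when `A` is symmetric (Hermitian), `0` otherwise. -/
noncomputable def ESD {n : ℕ} (A : Matrix (Fin n) (Fin n) ℝ) : Measure ℝ :=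
  if hA : A.IsHermitian then
    ((n : ℝ≥0∞))⁻¹ • ∑ i : Fin n, Measure.dirac (hA.eigenvalues i)
  else 0

/-- Weak convergence of a sequence of measures on `ℝ`, tested against bounded
continuous functions. -/
def WeakLim (μ : ℕ → Measure ℝ) (ν : Measure ℝ) : Prop :=
  ∀ f : BoundedContinuousFunction ℝ ℝ,
    Tendsto (fun n => ∫ x, f x ∂(μ n)) atTop (𝓝 (∫ x, f x ∂ν))

/-- The bounded Lipschitz metric on measures on `ℝ`. -/
noncomputable def dBL (μ ν : Measure ℝ) : ℝ :=
  sSup { r : ℝ | ∃ f : ℝ → ℝ, (∀ x, |f x| ≤ 1) ∧ LipschitzWith 1 f ∧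
    r = |(∫ x, f x ∂μ) - (∫ x, f x ∂ν)| }

/-- The sample autocovariance `γ̂_Y(k) = n⁻¹ ∑_{i=1}^{n-|k|} Y_i Y_{i+|k|}`. -/
noncomputable def sampleACV (Y : ℤ → ℝ) (n : ℕ) (k : ℤ) : ℝ :=
  (n : ℝ)⁻¹ * ∑ i ∈ Finset.Icc (1 : ℤ) ((n : ℤ) - |k|), Y i * Y (i + |k|)

/-- The sample autocovariance matrix `Γ_n(Y) = ((γ̂_Y(i-j)))`. -/
noncomputable def sampleACVM (Y : ℤ → ℝ) (n : ℕ) : Matrix (Fin n) (Fin n) ℝ :=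
  Matrix.of fun i j => sampleACV Y n (((i : ℕ) : ℤ) - ((j : ℕ) : ℤ))

/-- The modified sample autocovariance `γ*_Y(k) = n⁻¹ ∑_{i=1}^{n} Y_i Y_{i+|k|}`. -/
noncomputable def sampleACVstar (Y : ℤ → ℝ) (n : ℕ) (k : ℤ) : ℝ :=
  (n : ℝ)⁻¹ * ∑ i ∈ Finset.Icc (1 : ℤ) (n : ℤ), Y i * Y (i + |k|)

/-- The modified sample autocovariance matrix `Γ*_n(Y) = ((γ*_Y(|i-j|)))`. -/
noncomputable def sampleACVMstar (Y : ℤ → ℝ) (n : ℕ) : Matrix (Fin n) (Fin n) ℝ :=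
  Matrix.of fun i j => sampleACVstar Y n (((i : ℕ) : ℤ) - ((j : ℕ) : ℤ))

/-- The Type I banded sample ACVM: entries with `|i - j| ≥ m` are replaced by `0`. -/
noncomputable def bandACVM (Y : ℤ → ℝ) (n m : ℕ) : Matrix (Fin n) (Fin n) ℝ :=
  Matrix.of fun i j =>
    if |((i : ℕ) : ℤ) - ((j : ℕ) : ℤ)| < (m : ℤ) then
      sampleACV Y n (((i : ℕ) : ℤ) - ((j : ℕ) : ℤ)) else 0

/-- The Type II banded sample ACVM: the `m × m` principal submatrix of `Γ_n(Y)`. -/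
noncomputable def subACVM (Y : ℤ → ℝ) (n m : ℕ) : Matrix (Fin m) (Fin m) ℝ :=
  Matrix.of fun i j => sampleACV Y n (((i : ℕ) : ℤ) - ((j : ℕ) : ℤ))

/-- The tapered sample ACVM `Γ_{n,K}(Y) = ((K((i-j)/m) γ̂_Y(i-j)))`. -/
noncomputable def taperACVM (K : ℝ → ℝ) (Y : ℤ → ℝ) (n m : ℕ) : Matrix (Fin n) (Fin n) ℝ :=
  Matrix.of fun i j =>
    K (((((i : ℕ) : ℤ) - ((j : ℕ) : ℤ) : ℤ) : ℝ) / (m : ℝ)) *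
      sampleACV Y n (((i : ℕ) : ℤ) - ((j : ℕ) : ℤ))

/-- The MA(d) process `X_{t,d} = ∑_{k=0}^{d} θ_k ε_{t-k}`. -/
noncomputable def MAfin {Ω : Type*} (θ : ℕ → ℝ) (d : ℕ) (ε : ℤ → Ω → ℝ) (ω : Ω) (t : ℤ) : ℝ :=
  ∑ k ∈ Finset.range (d + 1), θ k * ε (t - (k : ℤ)) ω

/-- The MA(∞) process `X_t = ∑_{k=0}^{∞} θ_k ε_{t-k}`. -/
noncomputable def MAinf {Ω : Type*} (θ : ℕ → ℝ) (ε : ℤ → Ω → ℝ) (ω : Ω) (t : ℤ) : ℝ :=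
  ∑' k : ℕ, θ k * ε (t - (k : ℤ)) ω

/-- Assumption A(a): `{ε_t}` are i.i.d. with mean `0` and variance `1`. -/
def AssumptionAa {Ω : Type*} [MeasureSpace Ω] (ε : ℤ → Ω → ℝ) : Prop :=
  IsProbabilityMeasure (ℙ : Measure Ω) ∧ (∀ t, Measurable (ε t)) ∧
  iIndepFun ε ℙ ∧
  (∀ t, Measure.map (ε t) ℙ = Measure.map (ε 0) ℙ) ∧
  (∀ t, (∫ ω, ε t ω) = 0) ∧ (∀ t, (∫ ω, (ε t ω) ^ 2) = 1)

/-- Assumption A(b): `{ε_t}` are independent, uniformly bounded, with mean `0` and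
variance `1`. -/
def AssumptionAb {Ω : Type*} [MeasureSpace Ω] (ε : ℤ → Ω → ℝ) : Prop :=
  IsProbabilityMeasure (ℙ : Measure Ω) ∧ (∀ t, Measurable (ε t)) ∧
  iIndepFun ε ℙ ∧
  (∃ C : ℝ, ∀ t ω, |ε t ω| ≤ C) ∧
  (∀ t, (∫ ω, ε t ω) = 0) ∧ (∀ t, (∫ ω, (ε t ω) ^ 2) = 1)

/-- The ACVF of the MA(d) process: `γ_{X^{(d)}}(j) = ∑_{k=0}^{d-j} θ_k θ_{j+k}`. -/
noncomputable def gammaFin (θ : ℕ → ℝ) (d j : ℕ) : ℝ :=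
  if j ≤ d then ∑ k ∈ Finset.range (d - j + 1), θ k * θ (j + k) else 0

/-- The ACVF of the MA(∞) process: `γ_X(j) = ∑_{k=0}^{∞} θ_k θ_{j+k}`. -/
noncomputable def gammaInf (θ : ℕ → ℝ) (j : ℕ) : ℝ :=
  ∑' k : ℕ, θ k * θ (j + k)

/-- The spectral density of the MA(∞) process:
`f_X(t) = ∑_{k=-∞}^{∞} exp(-2πitk) γ_X(|k|) = γ_X(0) + 2 ∑_{k≥1} cos(2πtk) γ_X(k)`. -/
noncomputable def specDensityInf (θ : ℕ → ℝ) (t : ℝ) : ℝ :=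
  gammaInf θ 0 + 2 * ∑' k : ℕ, Real.cos (2 * Real.pi * t * ((k : ℝ) + 1)) * gammaInf θ (k + 1)

/-- The spectral density of the MA(d) process. -/
noncomputable def specDensityFin (θ : ℕ → ℝ) (d : ℕ) (t : ℝ) : ℝ :=
  gammaFin θ d 0 + 2 * ∑ k ∈ Finset.Icc 1 d, Real.cos (2 * Real.pi * t * (k : ℝ)) * gammaFin θ d k

/-- The law of `f(U)` where `U` is uniform on `(0, 1]`. -/
noncomputable def specLaw (f : ℝ → ℝ) : Measure ℝ :=
  Measure.map f (MeasureTheory.volume.restrict (Set.Ioc (0 : ℝ) 1))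

/-- `a` is d-matched: every coordinate is within `d` of some other coordinate. -/
def dMatched (d : ℕ) {h : ℕ} (a : Fin (2 * h) → ℕ) : Prop :=
  ∀ i, ∃ j, j ≠ i ∧ |(a i : ℤ) - (a j : ℤ)| ≤ (d : ℤ)

/-- `a` is minimal d-matched: there is a partition of the index set into pairs
(a fixed-point-free involution) such that `|a_x - a_y| ≤ d` holds exactly on pairs. -/
def minimalMatched (d : ℕ) {h : ℕ} (a : Fin (2 * h) → ℕ) : Prop :=
  ∃ σ : Equiv.Perm (Fin (2 * h)), (∀ x, σ x ≠ x) ∧ (∀ x, σ (σ x) = x) ∧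
    ∀ x y, x ≠ y → (|(a x : ℤ) - (a y : ℤ)| ≤ (d : ℤ) ↔ σ x = y)

/-!
Diagonalize `A = U diag(λ) Uᵀ` and `B = V diag(μ) Vᵀ` with orthogonal `U`, `V`. The squared
entries of the orthogonal matrix `Uᵀ V` form a doubly stochastic matrix `w`, and
`Tr((A - B)²) = ∑ᵢⱼ wᵢⱼ (λᵢ - μⱼ)²`. For a 1-Lipschitz `f`, the row and column sums of `w` give
`∑ᵢ f(λᵢ) - ∑ⱼ f(μⱼ) = ∑ᵢⱼ wᵢⱼ (f(λᵢ) - f(μⱼ))`, of absolute value at most `∑ᵢⱼ wᵢⱼ |λᵢ - μⱼ|`;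
Cauchy–Schwarz against the weights `w`, of total mass `n`, bounds its square by
`n Tr((A - B)²)`.
-/

open Matrix

lemma integral_ESD {n : ℕ} {A : Matrix (Fin n) (Fin n) ℝ} (hA : A.IsHermitian) (f : ℝ → ℝ) :
    ∫ x, f x ∂ESD A = (n : ℝ)⁻¹ * ∑ i, f (hA.eigenvalues i) := by
  rw [ESD, dif_pos hA, integral_smul_measure, integral_finsetSum_measure
    fun i _ => integrable_dirac enorm_lt_top]
  simp [integral_dirac, ENNReal.toReal_inv]

lemma dBL_sq_le_of_forall_sq_le {μ ν : Measure ℝ} {c : ℝ}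
    (h : ∀ f : ℝ → ℝ, (∀ x, |f x| ≤ 1) → LipschitzWith 1 f →
      ((∫ x, f x ∂μ) - ∫ x, f x ∂ν) ^ 2 ≤ c) :
    dBL μ ν ^ 2 ≤ c := by
  have hc : 0 ≤ c := by
    simpa using h (fun _ => 0) (by simp) ((LipschitzWith.const 0).weaken zero_le_one)
  have hle : dBL μ ν ≤ √c := by
    refine Real.sSup_le ?_ (Real.sqrt_nonneg c)
    rintro _ ⟨f, hb, hf, rfl⟩
    exact Real.abs_le_sqrt (h f hb hf)
  have hnonneg : 0 ≤ dBL μ ν := Real.sSup_nonneg fun _ ⟨_, _, _, hr⟩ => hr ▸ abs_nonneg _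
  exact (Real.le_sqrt hnonneg hc).mp hle

section DoublyStochastic

variable {m : Type*} [Fintype m] [DecidableEq m] {w : Matrix m m ℝ}

lemma Matrix.map_sq_mem_doublyStochastic {W : Matrix m m ℝ} (hW : W ∈ unitaryGroup m ℝ) :
    W.map (· ^ 2) ∈ doublyStochastic ℝ m := by
  rw [mem_doublyStochastic_iff_sum]
  refine ⟨fun i j => sq_nonneg _, fun i => ?_, fun j => ?_⟩
  · simpa [mul_apply, sq] using congr_fun₂ (mem_unitaryGroup_iff.mp hW) i i
  · simpa [mul_apply, sq] using congr_fun₂ (mem_unitaryGroup_iff'.mp hW) j j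

lemma abs_sum_comp_sub_sum_comp_le (hw : w ∈ doublyStochastic ℝ m)
    {f : ℝ → ℝ} (hf : LipschitzWith 1 f) (x y : m → ℝ) :
    |∑ i, f (x i) - ∑ j, f (y j)| ≤ ∑ i, ∑ j, w i j * |x i - y j| := by
  have hx : ∑ i, f (x i) = ∑ i, ∑ j, w i j * f (x i) := by
    simp [← Finset.sum_mul, sum_row_of_mem_doublyStochastic hw]
  have hy : ∑ j, f (y j) = ∑ i, ∑ j, w i j * f (y j) := by
    rw [Finset.sum_comm]
    simp [← Finset.sum_mul, sum_col_of_mem_doublyStochastic hw]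
  rw [hx, hy, ← Finset.sum_sub_distrib]
  refine (Finset.abs_sum_le_sum_abs _ _).trans (Finset.sum_le_sum fun i _ => ?_)
  rw [← Finset.sum_sub_distrib]
  refine (Finset.abs_sum_le_sum_abs _ _).trans (Finset.sum_le_sum fun j _ => ?_)
  rw [← mul_sub, abs_mul, abs_of_nonneg (nonneg_of_mem_doublyStochastic hw)]
  exact mul_le_mul_of_nonneg_left (by simpa [Real.dist_eq] using hf.dist_le_mul (x i) (y j))
    (nonneg_of_mem_doublyStochastic hw)

lemma sq_sum_mul_abs_le (hw : w ∈ doublyStochastic ℝ m) (z : m → m → ℝ) :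
    (∑ i, ∑ j, w i j * |z i j|) ^ 2 ≤ Fintype.card m * ∑ i, ∑ j, w i j * z i j ^ 2 := by
  have hmass : ∑ p : m × m, w p.1 p.2 = Fintype.card m := by
    simp [Fintype.sum_prod_type, sum_row_of_mem_doublyStochastic hw]
  simp only [← Fintype.sum_prod_type']
  rw [← hmass]
  refine Finset.sum_sq_le_sum_mul_sum_of_sq_le_mul _
    (fun p _ => nonneg_of_mem_doublyStochastic hw)
    (fun p _ => mul_nonneg (nonneg_of_mem_doublyStochastic hw) (sq_nonneg _)) fun p _ => ?_
  rw [mul_pow, sq_abs]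
  exact le_of_eq (by ring)

lemma sq_mean_comp_sub_mean_comp_le (hw : w ∈ doublyStochastic ℝ m)
    {f : ℝ → ℝ} (hf : LipschitzWith 1 f) (x y : m → ℝ) :
    ((Fintype.card m : ℝ)⁻¹ * ∑ i, f (x i) - (Fintype.card m : ℝ)⁻¹ * ∑ j, f (y j)) ^ 2 ≤
      (Fintype.card m : ℝ)⁻¹ * ∑ i, ∑ j, w i j * (x i - y j) ^ 2 := by
  set N : ℝ := (Fintype.card m : ℝ)
  have hsum : (∑ i, f (x i) - ∑ j, f (y j)) ^ 2 ≤ N * ∑ i, ∑ j, w i j * (x i - y j) ^ 2 :=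
    calc (∑ i, f (x i) - ∑ j, f (y j)) ^ 2
        = |∑ i, f (x i) - ∑ j, f (y j)| ^ 2 := (sq_abs _).symm
      _ ≤ (∑ i, ∑ j, w i j * |x i - y j|) ^ 2 :=
          pow_le_pow_left₀ (abs_nonneg _) (abs_sum_comp_sub_sum_comp_le hw hf x y) 2
      _ ≤ N * ∑ i, ∑ j, w i j * (x i - y j) ^ 2 := sq_sum_mul_abs_le hw _
  rw [← mul_sub, mul_pow]
  calc N⁻¹ ^ 2 * (∑ i, f (x i) - ∑ j, f (y j)) ^ 2
      ≤ N⁻¹ ^ 2 * (N * ∑ i, ∑ j, w i j * (x i - y j) ^ 2) := by gcongr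
    _ = N⁻¹ * ∑ i, ∑ j, w i j * (x i - y j) ^ 2 := by
      rcases eq_or_ne N 0 with hN | hN
      · simp [hN]
      · field_simp

end DoublyStochastic

lemma Matrix.trace_conjTranspose_mul_self_eq_sum_sq {m n : Type*} [Fintype m] [Fintype n]
    (X : Matrix m n ℝ) :
    trace (Xᴴ * X) = ∑ i, ∑ j, X i j ^ 2 := by
  simp only [trace, diag_apply, mul_apply, conjTranspose_apply, star_trivial, sq]
  exact Finset.sum_comm

section Unitary

variable {m : Type*} [Fintype m] [DecidableEq m]

lemma Matrix.trace_conjTranspose_mul_self_unitary_conj {n R : Type*} [Fintype n] [DecidableEq n]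
    [CommRing R] [StarRing R] {U : Matrix m m R} {V : Matrix n n R} (hU : U ∈ unitaryGroup m R)
    (hV : V ∈ unitaryGroup n R) (X : Matrix m n R) :
    trace ((U * X * star V)ᴴ * (U * X * star V)) = trace (Xᴴ * X) := by
  calc trace ((U * X * star V)ᴴ * (U * X * star V))
      = trace (V * (Xᴴ * (star U * U) * X * star V)) := by
        simp only [conjTranspose_mul, ← star_eq_conjTranspose, star_star, Matrix.mul_assoc]
    _ = trace (Xᴴ * X * (star V * V)) := by
        rw [trace_mul_comm, mem_unitaryGroup_iff'.mp hU, Matrix.mul_one, Matrix.mul_assoc]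
    _ = trace (Xᴴ * X) := by rw [mem_unitaryGroup_iff'.mp hV, Matrix.mul_one]

lemma Matrix.trace_sq_sub_unitary_diagonal_conj {U V : Matrix m m ℝ} (hU : U ∈ unitaryGroup m ℝ)
    (hV : V ∈ unitaryGroup m ℝ) (d e : m → ℝ) :
    trace ((U * diagonal d * star U - V * diagonal e * star V)ᴴ *
        (U * diagonal d * star U - V * diagonal e * star V)) =
      ∑ i, ∑ j, (star U * V) i j ^ 2 * (d i - e j) ^ 2 := by
  have hconj : U * diagonal d * star U - V * diagonal e * star V =
      U * (diagonal d * (star U * V) - (star U * V) * diagonal e) * star V := by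
    simp only [Matrix.mul_sub, Matrix.sub_mul, ← Matrix.mul_assoc,
      mem_unitaryGroup_iff.mp hU, Matrix.one_mul]
    simp only [Matrix.mul_assoc, mem_unitaryGroup_iff.mp hV, Matrix.mul_one]
  rw [hconj, trace_conjTranspose_mul_self_unitary_conj hU hV,
    trace_conjTranspose_mul_self_eq_sum_sq]
  simp only [sub_apply, diagonal_mul, mul_diagonal]
  exact Finset.sum_congr rfl fun i _ => Finset.sum_congr rfl fun j _ => by ring

lemma Matrix.IsHermitian.eq_eigenvectorUnitary_mul_diagonal_mul_star {A : Matrix m m ℝ}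
    (hA : A.IsHermitian) :
    A = hA.eigenvectorUnitary * diagonal hA.eigenvalues *
      star (hA.eigenvectorUnitary : Matrix m m ℝ) := by
  simpa [Unitary.conjStarAlgAut_apply] using hA.spectral_theorem

lemma Matrix.IsHermitian.exists_mem_doublyStochastic_trace_sub_mul_sub_eq {A B : Matrix m m ℝ}
    (hA : A.IsHermitian) (hB : B.IsHermitian) :
    ∃ w ∈ doublyStochastic ℝ m, trace ((A - B) * (A - B)) =
      ∑ i, ∑ j, w i j * (hA.eigenvalues i - hB.eigenvalues j) ^ 2 := by
  have hU := hA.eigenvectorUnitary.2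
  have hV := hB.eigenvectorUnitary.2
  refine ⟨(star (hA.eigenvectorUnitary : Matrix m m ℝ) * hB.eigenvectorUnitary).map (· ^ 2),
    map_sq_mem_doublyStochastic (Submonoid.mul_mem _ (Unitary.star_mem hU) hV), ?_⟩
  have hsq : (A - B) * (A - B) = (A - B)ᴴ * (A - B) := by rw [(hA.sub hB).eq]
  rw [hsq]
  conv_lhs => rw [hA.eq_eigenvectorUnitary_mul_diagonal_mul_star,
      hB.eq_eigenvectorUnitary_mul_diagonal_mul_star]
  exact trace_sq_sub_unitary_diagonal_conj hU hV _ _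

end Unitary

/-- Lemma 1(a): for `n × n` real symmetric matrices `A`, `B`,
`d_BL²(F^A, F^B) ≤ (1/n) Tr((A - B)²)`. -/
theorem dBL_sq_le_trace_sq (n : ℕ) (A B : Matrix (Fin n) (Fin n) ℝ)
    (hA : A.IsHermitian) (hB : B.IsHermitian) :
    dBL (ESD A) (ESD B) ^ 2 ≤ (1 / (n : ℝ)) * Matrix.trace ((A - B) * (A - B)) := by
  obtain ⟨w, hw, htrace⟩ := hA.exists_mem_doublyStochastic_trace_sub_mul_sub_eq hB
  refine dBL_sq_le_of_forall_sq_le fun f _ hf => ?_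
  rw [integral_ESD hA, integral_ESD hB, htrace, one_div]
  simpa using sq_mean_comp_sub_mean_comp_le hw hf hA.eigenvalues hB.eigenvalues
end
end

section
/- Fix positive integers h and d. The number of vectors a = (a_1,…,a_{2h}) ∈ {1,…,2n}^{2h} that are d-matched but not minimal d-matched is O(n^{h−1}) as n → ∞; that is, there is a constant C (depending only on h and d) such that this number is at most C·n^{h−1} for all n. -/
open MeasureTheory Filter Finset ProbabilityTheory Topology
open scoped Classical ENNReal NNReal

noncomputable section

/-!
Join two indices when their values differ by at most `d`. If `a` is d-matched, every connected
component of this graph has at least two vertices, and if all of them had exactly two, the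
components would be the pairs of a minimal matching; so a d-matched but not minimal `a` has at
most `h - 1` components. Such an `a` is determined by a representative of the component of each
index, the offsets `a i - a (rep i)` (at most `2h·d` in absolute value, following a path), and the
values at the at most `h - 1` representatives, which leaves `O(n^(h-1))` choices.
-/

def closeGraph {ι : Type*} (d : ℕ) (a : ι → ℕ) : SimpleGraph ι where
  Adj i j := i ≠ j ∧ |(a i : ℤ) - a j| ≤ d
  symm := ⟨fun _ _ h => ⟨h.1.symm, abs_sub_comm (a _ : ℤ) _ ▸ h.2⟩⟩
  loopless := ⟨fun _ h => h.1 rfl⟩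

namespace SimpleGraph

variable {V : Type*} (G : SimpleGraph V)

def componentRep (v : V) : V := (G.connectedComponentMk v).out

variable {G}

lemma reachable_componentRep (v : V) : G.Reachable (G.componentRep v) v :=
  ConnectedComponent.exact (G.connectedComponentMk v).out_eq

lemma card_image_componentRep_le [Fintype V] [DecidableEq V] [Fintype G.ConnectedComponent] :
    #(univ.image G.componentRep) ≤ Fintype.card G.ConnectedComponent := by
  rw [show G.componentRep = (fun c => c.out) ∘ G.connectedComponentMk from rfl, ← image_image]
  exact card_image_le.trans (card_le_univ _)

variable [Fintype V]

lemma two_le_card_component_of_forall_exists_adj (hG : ∀ v, ∃ w, G.Adj v w)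
    (c : G.ConnectedComponent) : 2 ≤ #{v | G.connectedComponentMk v = c} := by
  induction c using ConnectedComponent.ind with | h v => ?_
  obtain ⟨w, hvw⟩ := hG v
  refine one_lt_card.mpr ⟨v, by simp, w, ?_, hvw.ne⟩
  simpa using (ConnectedComponent.connectedComponentMk_eq_of_adj hvw).symm

lemma exists_involution_of_card_component_le_two (hG : ∀ v, ∃ w, G.Adj v w)
    (h2 : ∀ c : G.ConnectedComponent, #{v | G.connectedComponentMk v = c} ≤ 2) :
    ∃ σ : Equiv.Perm V, (∀ x, σ x ≠ x) ∧ (∀ x, σ (σ x) = x) ∧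
      ∀ x y, G.Adj x y ↔ σ x = y := by
  have hunique : ∀ x y z, G.Adj x y → G.Adj x z → y = z := by
    intro x y z hy hz
    by_contra hyz
    refine (h2 (G.connectedComponentMk x)).not_gt
      (two_lt_card.mpr ⟨x, ?_, y, ?_, z, ?_, hy.ne, hz.ne, hyz⟩)
    · simp
    · simpa using (ConnectedComponent.connectedComponentMk_eq_of_adj hy).symm
    · simpa using (ConnectedComponent.connectedComponentMk_eq_of_adj hz).symm
  choose σ hσ using hG
  have hinv : Function.Involutive σ := fun x => (hunique _ _ _ (hσ (σ x)) (hσ x).symm)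
  refine ⟨hinv.toPerm, fun x => (hσ x).ne.symm, hinv, fun x y => ⟨fun hy => ?_, ?_⟩⟩
  · exact hunique x _ _ (hσ x) hy
  · rintro rfl
    exact hσ x

end SimpleGraph

open SimpleGraph

lemma card_le_pow_of_eqOn_imp_eq {ι α : Type*} [Fintype ι] {A : Finset (ι → α)}
    {T : Finset α} (R : Finset ι) (hA : ∀ a ∈ A, ∀ i, a i ∈ T)
    (hR : ∀ a ∈ A, ∀ b ∈ A, Set.EqOn a b R → a = b) :
    #A ≤ #T ^ #R := by
  calc #A ≤ #(Fintype.piFinset fun _ : R => T) :=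
        card_le_card_of_injOn (fun a j => a j) (fun a ha => by simpa using fun j _ => hA a ha j)
          (fun a ha b hb hab => hR a ha b hb fun j hj => congrFun hab ⟨j, hj⟩)
    _ = #T ^ #R := by simp

namespace closeGraph

variable {ι : Type*} {d : ℕ} {a : ι → ℕ}

lemma abs_sub_le_of_walk {u v : ι} (p : (closeGraph d a).Walk u v) :
    |(a u : ℤ) - a v| ≤ d * p.length := by
  induction p with
  | nil => simp
  | @cons u w v huw p ih =>
    calc |(a u : ℤ) - a v| ≤ |(a u : ℤ) - a w| + |(a w : ℤ) - a v| := abs_sub_le _ _ _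
      _ ≤ d + d * p.length := add_le_add huw.2 ih
      _ = d * (p.cons huw).length := by rw [Walk.length_cons]; push_cast; ring

lemma abs_sub_le_of_reachable [Fintype ι] {u v : ι} (h : (closeGraph d a).Reachable u v) :
    |(a u : ℤ) - a v| ≤ d * Fintype.card ι := by
  obtain ⟨p⟩ := h
  calc |(a u : ℤ) - a v| ≤ d * p.toPath.1.length := abs_sub_le_of_walk _
    _ ≤ d * Fintype.card ι := by gcongr; exact p.toPath.2.length_lt.le

end closeGraph

lemma card_connectedComponent_closeGraph_le_of_not_minimalMatched {d h : ℕ}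
    {a : Fin (2 * h) → ℕ} (hm : dMatched d a) (hnm : ¬ minimalMatched d a) :
    Fintype.card (closeGraph d a).ConnectedComponent ≤ h - 1 := by
  set G := closeGraph d a
  have hG : ∀ i, ∃ j, G.Adj i j := fun i => (hm i).imp fun j hj => ⟨hj.1.symm, hj.2⟩
  obtain ⟨c, hc⟩ : ∃ c : G.ConnectedComponent, 2 < #{i | G.connectedComponentMk i = c} := by
    by_contra! h2
    obtain ⟨σ, hσ, hinv, hadj⟩ := exists_involution_of_card_component_le_two hG h2
    exact hnm ⟨σ, hσ, hinv, fun x y hxy => (and_iff_right hxy).symm.trans (hadj x y)⟩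
  have hsum : ∑ c : G.ConnectedComponent, #{i | G.connectedComponentMk i = c} = 2 * h := by
    rw [← card_eq_sum_card_fiberwise (f := G.connectedComponentMk) (s := univ) (t := univ)
      (fun i _ => mem_univ _), card_univ, Fintype.card_fin]
  have := sum_lt_sum (s := univ) (fun c _ => two_le_card_component_of_forall_exists_adj hG c)
    ⟨c, mem_univ _, hc⟩
  rw [hsum, sum_const, card_univ, smul_eq_mul] at this
  omega

theorem card_filter_card_connectedComponent_closeGraph_le {ι : Type*} [Fintype ι] [DecidableEq ι]
    [Nonempty ι] (d k : ℕ) (T : Finset ℕ) :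
    #{a ∈ Fintype.piFinset fun _ : ι => T |
        Fintype.card (closeGraph d a).ConnectedComponent ≤ k} ≤
      #T ^ k * (Fintype.card ι ^ Fintype.card ι *
        (2 * (d * Fintype.card ι) + 1) ^ Fintype.card ι) := by
  set S := {a ∈ Fintype.piFinset fun _ : ι => T |
    Fintype.card (closeGraph d a).ConnectedComponent ≤ k}
  set m := Fintype.card ι
  set code : (ι → ℕ) → (ι → ι) × (ι → ℤ) := fun a =>
    ((closeGraph d a).componentRep, fun i => a i - a ((closeGraph d a).componentRep i))
  set codes := (Fintype.piFinset fun _ : ι => (univ : Finset ι)) ×ˢ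
    Fintype.piFinset fun _ : ι => Icc (-(d * m : ℤ)) (d * m)
  have hcodes : #codes = m ^ m * (2 * (d * m) + 1) ^ m := by
    simp [codes, m]
    omega
  rw [← hcodes]
  refine card_le_mul_card_image_of_maps_to (f := code) (fun a _ => ?_) _ fun c _ => ?_
  · simp only [code, codes, mem_product, Fintype.mem_piFinset, mem_univ, implies_true, true_and,
      mem_Icc, ← abs_le]
    exact fun i =>
      closeGraph.abs_sub_le_of_reachable (reachable_componentRep (G := closeGraph d a) i).symm
  have hdet : ∀ a ∈ {a ∈ S | code a = c}, ∀ i, (a i : ℤ) = a (c.1 i) + c.2 i := by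
    intro a ha i
    rw [← (mem_filter.mp ha).2]
    simp [code]
  obtain hF | ⟨a₀, ha₀⟩ := {a ∈ S | code a = c}.eq_empty_or_nonempty
  · simp [hF]
  obtain ⟨ha₀S, rfl⟩ := mem_filter.mp ha₀
  simp only [S, mem_filter, Fintype.mem_piFinset] at ha₀S
  have hT : 1 ≤ #T := card_pos.mpr ⟨_, ha₀S.1 (Classical.arbitrary ι)⟩
  calc _ ≤ #T ^ #(univ.image (code a₀).1) := card_le_pow_of_eqOn_imp_eq _ (fun a ha => ?_) ?_
    _ ≤ #T ^ k := pow_le_pow_right₀ hT (card_image_componentRep_le.trans ha₀S.2)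
  · simp only [S, mem_filter, Fintype.mem_piFinset] at ha
    exact ha.1.1
  · intro a ha b hb hab
    funext i
    have := hab (mem_image_of_mem _ (mem_univ i))
    have := hdet a ha i
    have := hdet b hb i
    omega

/-- Lemma 3: the number of vectors `a ∈ {1,…,2n}^{2h}` that are d-matched but not
minimal d-matched is `O(n^{h-1})`. -/
theorem card_matched_not_minimal_bigO (h d : ℕ) (hh : 0 < h) :
    ∃ C : ℝ, ∀ n : ℕ,
      (Nat.card {a : Fin (2 * h) → ℕ //
          (∀ i, 1 ≤ a i ∧ a i ≤ 2 * n) ∧ dMatched d a ∧ ¬ minimalMatched d a} : ℝ)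
        ≤ C * (n : ℝ) ^ (h - 1) := by
  have : Nonempty (Fin (2 * h)) := ⟨⟨0, by omega⟩⟩
  set K := (2 * h) ^ (2 * h) * (2 * (d * (2 * h)) + 1) ^ (2 * h)
  refine ⟨2 ^ (h - 1) * K, fun n => ?_⟩
  have hcard := card_filter_card_connectedComponent_closeGraph_le (ι := Fin (2 * h)) d (h - 1)
    (Icc 1 (2 * n))
  have hsub : Nat.card {a : Fin (2 * h) → ℕ //
      (∀ i, 1 ≤ a i ∧ a i ≤ 2 * n) ∧ dMatched d a ∧ ¬ minimalMatched d a} ≤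
      #{a ∈ Fintype.piFinset fun _ : Fin (2 * h) => Icc 1 (2 * n) |
        Fintype.card (closeGraph d a).ConnectedComponent ≤ h - 1} := by
    rw [← Nat.card_eq_finsetCard]
    refine Nat.card_le_card_of_injective (fun a => ⟨a.1, ?_⟩) fun a b hab =>
      Subtype.ext (by simpa using hab)
    obtain ⟨a, ha, hm, hnm⟩ := a
    simpa [ha] using card_connectedComponent_closeGraph_le_of_not_minimalMatched hm hnm
  rw [Nat.card_Icc, Fintype.card_fin, add_tsub_cancel_right] at hcard
  calc _ ≤ (((2 * n) ^ (h - 1) * K : ℕ) : ℝ) := mod_cast hsub.trans hcard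
    _ = 2 ^ (h - 1) * K * (n : ℝ) ^ (h - 1) := by push_cast; ring
end
end

section
/- Suppose Assumption A(a) or A(b) holds. Then the limiting spectral distribution F_d of the sample autocovariance matrix Γ_n(X^{(d)}) is identical for the three parameter sequences (θ_0, θ_1, θ_2, θ_3, …), (θ_0, −θ_1, θ_2, −θ_3, …) (signs flipped at odd indices), and (−θ_0, θ_1, −θ_2, θ_3, …) (signs flipped at even indices). -/
open MeasureTheory Filter Finset ProbabilityTheory Topology
open scoped Classical ENNReal NNReal

noncomputable section

/-!
If `ε` is admissible noise, so is `ε'_t = (-1)^t ε_t`, and for `c = ±1` the MA(d) process with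
coefficients `c (-1)^j θ_j` driven by `ε'` is `c (-1)^t X_t`, where `X` is the one with coefficients
`θ_j` driven by `ε`. Its sample autocovariance matrix is `D Γ_n(X) D` with `D = diag((-1)^i)`,
`D² = 1`, so it has the characteristic polynomial, hence the spectrum and the ESD, of `Γ_n(X)`.
Evaluating the three almost sure convergences at one common sample point of a Rademacher sequence
thus exhibits `F`, `F'` and `F''` as weak limits of one and the same sequence.
-/

open Matrix

lemma isHermitian_sampleACVM (Y : ℤ → ℝ) (n : ℕ) : (sampleACVM Y n).IsHermitian := by
  ext i j
  simp [sampleACVM, sampleACV, abs_sub_comm]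

lemma ESD_eq_of_charpoly_eq {n : ℕ} {A B : Matrix (Fin n) (Fin n) ℝ} (hA : A.IsHermitian)
    (hB : B.IsHermitian) (h : A.charpoly = B.charpoly) : ESD A = ESD B := by
  have hspec : univ.val.map hA.eigenvalues = univ.val.map hB.eigenvalues := by
    have := hA.roots_charpoly_eq_eigenvalues
    rwa [h, hB.roots_charpoly_eq_eigenvalues, RCLike.ofReal_real_eq_id, Function.id_comp,
      Function.id_comp, eq_comm] at this
  have hsum (e : Fin n → ℝ) :
      ∑ i, Measure.dirac (e i) = ((univ.val.map e).map Measure.dirac).sum := by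
    rw [Multiset.map_map]; rfl
  rw [ESD, ESD, dif_pos hA, dif_pos hB, hsum, hsum, hspec]

lemma charpoly_mul_mul_of_mul_self_eq_one {R ι : Type*} [CommRing R] [Fintype ι] [DecidableEq ι]
    {D : Matrix ι ι R} (hD : D * D = 1) (A : Matrix ι ι R) :
    (D * A * D).charpoly = A.charpoly := by
  rw [charpoly_mul_comm, ← Matrix.mul_assoc, hD, Matrix.one_mul]

lemma sampleACV_sign_twist {c : ℝ} (hc : c * c = 1) (Y : ℤ → ℝ) (n : ℕ) (k : ℤ) :
    sampleACV (fun t => c * t.negOnePow * Y t) n k = k.negOnePow * sampleACV Y n k := by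
  simp only [sampleACV, Finset.mul_sum]
  refine Finset.sum_congr rfl fun i _ => ?_
  have hi : (i.negOnePow : ℝ) * i.negOnePow = 1 := by norm_cast; simp
  rw [Int.negOnePow_add, Int.negOnePow_abs]
  push_cast
  linear_combination (n : ℝ)⁻¹ * k.negOnePow * Y i * Y (i + |k|) *
    (i.negOnePow * i.negOnePow * hc + hi)

lemma sampleACVM_sign_twist {c : ℝ} (hc : c * c = 1) (Y : ℤ → ℝ) (n : ℕ) :
    sampleACVM (fun t => c * t.negOnePow * Y t) n =
      diagonal (fun i : Fin n => (((i : ℕ) : ℤ).negOnePow : ℝ)) * sampleACVM Y n *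
        diagonal (fun i : Fin n => (((i : ℕ) : ℤ).negOnePow : ℝ)) := by
  ext i j
  simp only [sampleACVM, of_apply, mul_diagonal, diagonal_mul, sampleACV_sign_twist hc,
    Int.negOnePow_sub]
  push_cast
  ring

lemma ESD_sampleACVM_sign_twist {c : ℝ} (hc : c * c = 1) (Y : ℤ → ℝ) (n : ℕ) :
    ESD (sampleACVM (fun t => c * t.negOnePow * Y t) n) = ESD (sampleACVM Y n) := by
  refine ESD_eq_of_charpoly_eq (isHermitian_sampleACVM _ n) (isHermitian_sampleACVM Y n) ?_
  rw [sampleACVM_sign_twist hc]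
  refine charpoly_mul_mul_of_mul_self_eq_one ?_ _
  rw [diagonal_mul_diagonal, ← diagonal_one]
  congr 1
  ext i
  norm_cast
  simp

lemma MAfin_sign_twist {Ω : Type*} (c : ℝ) (θ : ℕ → ℝ) (d : ℕ) (ε : ℤ → Ω → ℝ) (ω : Ω) :
    MAfin (fun j => c * (-1) ^ j * θ j) d (fun t ω' => t.negOnePow * ε t ω') ω =
      fun t => c * t.negOnePow * MAfin θ d ε ω t := by
  ext t
  simp only [MAfin, Finset.mul_sum]
  refine Finset.sum_congr rfl fun k _ => ?_
  have hk : ((-1 : ℝ) ^ k) * (-1) ^ k = 1 := by rw [← mul_pow]; simp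
  rw [Int.negOnePow_sub, Units.val_mul, Int.cast_mul, Int.cast_negOnePow_natCast]
  linear_combination c * t.negOnePow * θ k * ε (t - k) ω * hk

lemma ESD_sampleACVM_MAfin_sign_twist {Ω : Type*} {c : ℝ} (hc : c * c = 1) (θ : ℕ → ℝ)
    (d : ℕ) (ε : ℤ → Ω → ℝ) (ω : Ω) (n : ℕ) :
    ESD (sampleACVM (MAfin (fun j => c * (-1) ^ j * θ j) d
      (fun t ω' => t.negOnePow * ε t ω') ω) n) = ESD (sampleACVM (MAfin θ d ε ω) n) := by
  rw [MAfin_sign_twist, ESD_sampleACVM_sign_twist hc]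

lemma AssumptionAb.mul_left_of_abs_eq_one {Ω : Type*} [MeasureSpace Ω] {ε : ℤ → Ω → ℝ}
    (h : AssumptionAb ε) {s : ℤ → ℝ} (hs : ∀ t, |s t| = 1) :
    AssumptionAb (fun t ω => s t * ε t ω) := by
  obtain ⟨hP, hmeas, hindep, ⟨C, hC⟩, hmean, hvar⟩ := h
  refine ⟨hP, fun t => (hmeas t).const_mul _,
    hindep.comp (fun t x => s t * x) fun t => measurable_const_mul _,
    ⟨C, fun t ω => ?_⟩, fun t => ?_, fun t => ?_⟩
  · simpa [abs_mul, hs t] using hC t ω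
  · rw [integral_const_mul, hmean t, mul_zero]
  · simp_rw [mul_pow, ← sq_abs (s t), hs t, one_pow, one_mul]
    exact hvar t

lemma exists_assumptionAb :
    ∃ (Ω : Type) (_ : MeasureSpace Ω) (ε : ℤ → Ω → ℝ), AssumptionAb ε := by
  let _ : MeasureSpace (ℤ → Bool) :=
    ⟨Measure.infinitePi fun _ => (PMF.uniformOfFintype Bool).toMeasure⟩
  let r : Bool → ℝ := fun b => if b then 1 else -1
  have hint (t : ℤ) (f : Bool → ℝ) : ∫ ω : ℤ → Bool, f (ω t) = (f true + f false) / 2 := by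
    rw [← integral_map (measurable_pi_apply t).aemeasurable
      Measurable.of_discrete.aestronglyMeasurable, volume, Measure.infinitePi_map_eval,
      PMF.integral_eq_sum]
    simp [PMF.uniformOfFintype_apply]
    ring
  refine ⟨ℤ → Bool, inferInstance, fun t ω => r (ω t), ⟨?_, fun t => by fun_prop,
    iIndepFun_infinitePi fun _ => by fun_prop, ⟨1, fun t ω => ?_⟩, fun t => ?_, fun t => ?_⟩⟩
  · show IsProbabilityMeasure (Measure.infinitePi _)
    infer_instance
  · simp only [r]
    split <;> norm_num
  · rw [hint t r]; norm_num [r]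
  · rw [hint t (r · ^ 2)]; norm_num [r]

lemma WeakLim.unique {μ : ℕ → Measure ℝ} {ν ν' : Measure ℝ} [IsFiniteMeasure ν]
    [IsFiniteMeasure ν'] (h : WeakLim μ ν) (h' : WeakLim μ ν') : ν = ν' :=
  ext_of_forall_integral_eq_of_IsFiniteMeasure fun f => tendsto_nhds_unique (h f) (h' f)

theorem lsd_sign_flip_invariance_general (d : ℕ) (θ : ℕ → ℝ)
    (F F' F'' : Measure ℝ)
    (hFprob : IsProbabilityMeasure F) (hF'prob : IsProbabilityMeasure F')
    (hF''prob : IsProbabilityMeasure F'')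
    (hFLSD : ∀ (Ω : Type) [MeasureSpace Ω] (ε : ℤ → Ω → ℝ),
      AssumptionAa ε ∨ AssumptionAb ε →
      ∀ᵐ ω, WeakLim (fun n => ESD (sampleACVM (MAfin θ d ε ω) n)) F)
    (hF'LSD : ∀ (Ω : Type) [MeasureSpace Ω] (ε : ℤ → Ω → ℝ),
      AssumptionAa ε ∨ AssumptionAb ε →
      ∀ᵐ ω, WeakLim
        (fun n => ESD (sampleACVM (MAfin (fun j => (-1 : ℝ) ^ j * θ j) d ε ω) n)) F')
    (hF''LSD : ∀ (Ω : Type) [MeasureSpace Ω] (ε : ℤ → Ω → ℝ),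
      AssumptionAa ε ∨ AssumptionAb ε →
      ∀ᵐ ω, WeakLim
        (fun n => ESD (sampleACVM (MAfin (fun j => -((-1 : ℝ) ^ j) * θ j) d ε ω) n)) F'') :
    F' = F ∧ F'' = F := by
  obtain ⟨Ω, _, ε, hε⟩ := exists_assumptionAb
  have : IsProbabilityMeasure (ℙ : Measure Ω) := hε.1
  have hε' : AssumptionAb fun t ω => (t.negOnePow : ℝ) * ε t ω :=
    hε.mul_left_of_abs_eq_one fun t => by norm_cast; exact Int.abs_negOnePow t
  obtain ⟨ω, ⟨hF, hF'⟩, hF''⟩ :=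
    ((hFLSD Ω ε (.inr hε)).and (hF'LSD Ω _ (.inr hε'))).and (hF''LSD Ω _ (.inr hε')) |>.exists
  rw [show (fun j => (-1 : ℝ) ^ j * θ j) = fun j => 1 * (-1) ^ j * θ j by simp] at hF'
  rw [show (fun j => -((-1 : ℝ) ^ j) * θ j) = fun j => -1 * (-1) ^ j * θ j by simp] at hF''
  simp only [ESD_sampleACVM_MAfin_sign_twist (mul_one 1),
    ESD_sampleACVM_MAfin_sign_twist (by norm_num : (-1 : ℝ) * -1 = 1)] at hF' hF''
  exact ⟨hF'.unique hF, hF''.unique hF⟩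

/-- Remark 2(iii): under Assumption A(a) or A(b), the LSD of `Γ_n(X^{(d)})` is identical
for the coefficient sequences `(θ_0, θ_1, θ_2, …)`, `(θ_0, -θ_1, θ_2, -θ_3, …)` and
`(-θ_0, θ_1, -θ_2, θ_3, …)`. -/
theorem lsd_sign_flip_invariance (d : ℕ) (θ : ℕ → ℝ) (hθ0 : θ 0 ≠ 0)
    (F F' F'' : Measure ℝ)
    (hFprob : IsProbabilityMeasure F) (hF'prob : IsProbabilityMeasure F')
    (hF''prob : IsProbabilityMeasure F'')
    (hFLSD : ∀ (Ω : Type) [MeasureSpace Ω] (ε : ℤ → Ω → ℝ),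
      AssumptionAa ε ∨ AssumptionAb ε →
      ∀ᵐ ω, WeakLim (fun n => ESD (sampleACVM (MAfin θ d ε ω) n)) F)
    (hF'LSD : ∀ (Ω : Type) [MeasureSpace Ω] (ε : ℤ → Ω → ℝ),
      AssumptionAa ε ∨ AssumptionAb ε →
      ∀ᵐ ω, WeakLim
        (fun n => ESD (sampleACVM (MAfin (fun j => (-1 : ℝ) ^ j * θ j) d ε ω) n)) F')
    (hF''LSD : ∀ (Ω : Type) [MeasureSpace Ω] (ε : ℤ → Ω → ℝ),
      AssumptionAa ε ∨ AssumptionAb ε →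
      ∀ᵐ ω, WeakLim
        (fun n => ESD (sampleACVM (MAfin (fun j => -((-1 : ℝ) ^ j) * θ j) d ε ω) n)) F'') :
    F' = F ∧ F'' = F :=
  lsd_sign_flip_invariance_general d θ F F' F'' hFprob hF'prob hF''prob hFLSD hF'LSD hF''LSD
end
end
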